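/- The second derivative of the inverse Black-Scholes function satisfies (BS⁻¹)''(k,u) = [(BS⁻¹(k,u))⁴(T-t)² - 4(x-k)²] / [4 (e^x N'(d1(k,BS⁻¹(k,u))) (T-t))² (BS⁻¹(k,u))³], for u in the interior of the range of σ ↦ BS(k,σ). -/

import Mathlib

open MeasureTheory Real Filter Topology

/-- Standard normal density N'. -/
noncomputable def normPdf (z : ℝ) : ℝ := Real.exp (-z ^ 2 / 2) / Real.sqrt (2 * Real.pi)

/-- Standard normal CDF N. -/
noncomputable def normCdf (z : ℝ) : ℝ := ∫ u in Set.Iic z, normPdf u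

/-- Black-Scholes d1. -/
noncomputable def bsD1 (t T x k σ : ℝ) : ℝ :=
  (x - k) / (σ * Real.sqrt (T - t)) + σ / 2 * Real.sqrt (T - t)

/-- Black-Scholes d2. -/
noncomputable def bsD2 (t T x k σ : ℝ) : ℝ :=
  (x - k) / (σ * Real.sqrt (T - t)) - σ / 2 * Real.sqrt (T - t)

/-- Zero-rate Black-Scholes call price. -/
noncomputable def bsPrice (t T x k σ : ℝ) : ℝ :=
  Real.exp x * normCdf (bsD1 t T x k σ) - Real.exp k * normCdf (bsD2 t T x k σ)


lemma normPdf_pos (z : ℝ) : 0 < normPdf z := by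
  unfold normPdf
  have := Real.pi_pos
  positivity

lemma continuous_normPdf : Continuous normPdf := by
  unfold normPdf; fun_prop

lemma integrable_normPdf : Integrable normPdf := by
  have h : Integrable (fun z : ℝ => Real.exp (-(1/2 : ℝ) * z ^ 2)) :=
    integrable_exp_neg_mul_sq (by norm_num)
  have heq : normPdf = fun z => Real.exp (-(1/2 : ℝ) * z ^ 2) * (Real.sqrt (2 * Real.pi))⁻¹ := by
    funext z; unfold normPdf; rw [div_eq_mul_inv]; ring_nf
  rw [heq]; exact h.mul_const _

lemma hasDerivAt_normCdf (z : ℝ) : HasDerivAt normCdf (normPdf z) z := by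
  have key : normCdf = fun w => (∫ u in Set.Iic (0:ℝ), normPdf u) + ∫ u in (0:ℝ)..w, normPdf u := by
    funext w
    unfold normCdf
    rw [← intervalIntegral.integral_Iic_sub_Iic integrable_normPdf.integrableOn
      integrable_normPdf.integrableOn]
    ring
  rw [key]
  exact (intervalIntegral.integral_hasDerivAt_right
    integrable_normPdf.intervalIntegrable
    continuous_normPdf.aestronglyMeasurable.stronglyMeasurableAtFilter
    continuous_normPdf.continuousAt).const_add _

lemma hasDerivAt_normPdf (z : ℝ) : HasDerivAt normPdf (-z * normPdf z) z := by
  have h : HasDerivAt (fun z : ℝ => -z ^ 2 / 2) (-z) z := by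
    have := ((hasDerivAt_pow 2 z).neg).div_const 2
    simpa using this.congr_deriv (by ring)
  have := (h.exp).div_const (Real.sqrt (2 * Real.pi))
  unfold normPdf
  convert this using 1
  case e'_4 => rfl
  case e'_5 => rfl
  ring


lemma hasDerivAt_bsD1 (t T x k σ : ℝ) (ht : t < T) (hσ : σ ≠ 0) :
    HasDerivAt (fun σ => bsD1 t T x k σ)
      (-((x - k) / (σ ^ 2 * Real.sqrt (T - t))) + Real.sqrt (T - t) / 2) σ := by
  have hs : (0:ℝ) < Real.sqrt (T - t) := Real.sqrt_pos.2 (by linarith)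
  have h1 : HasDerivAt (fun σ : ℝ => σ * Real.sqrt (T - t)) (Real.sqrt (T - t)) σ :=
    by simpa using (hasDerivAt_id σ).mul_const (Real.sqrt (T - t))
  have h2 : HasDerivAt (fun σ : ℝ => (x - k) / (σ * Real.sqrt (T - t)))
      ((0 * (σ * Real.sqrt (T - t)) - (x - k) * Real.sqrt (T - t)) / (σ * Real.sqrt (T - t)) ^ 2) σ :=
    (hasDerivAt_const σ (x - k)).div h1 (mul_ne_zero hσ hs.ne')
  have h3 : HasDerivAt (fun σ : ℝ => σ / 2 * Real.sqrt (T - t)) (Real.sqrt (T - t) / 2) σ := by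
    have := ((hasDerivAt_id σ).div_const 2).mul_const (Real.sqrt (T - t))
    simpa using this.congr_deriv (by ring)
  have := h2.add h3
  unfold bsD1
  convert this using 1
  case e'_4 => rfl
  case e'_5 => rfl
  case e'_8 => rfl
  field_simp
  ring

lemma hasDerivAt_bsD2 (t T x k σ : ℝ) (ht : t < T) (hσ : σ ≠ 0) :
    HasDerivAt (fun σ => bsD2 t T x k σ)
      (-((x - k) / (σ ^ 2 * Real.sqrt (T - t))) - Real.sqrt (T - t) / 2) σ := by
  have hs : (0:ℝ) < Real.sqrt (T - t) := Real.sqrt_pos.2 (by linarith)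
  have h1 : HasDerivAt (fun σ : ℝ => σ * Real.sqrt (T - t)) (Real.sqrt (T - t)) σ :=
    by simpa using (hasDerivAt_id σ).mul_const (Real.sqrt (T - t))
  have h2 : HasDerivAt (fun σ : ℝ => (x - k) / (σ * Real.sqrt (T - t)))
      ((0 * (σ * Real.sqrt (T - t)) - (x - k) * Real.sqrt (T - t)) / (σ * Real.sqrt (T - t)) ^ 2) σ :=
    (hasDerivAt_const σ (x - k)).div h1 (mul_ne_zero hσ hs.ne')
  have h3 : HasDerivAt (fun σ : ℝ => σ / 2 * Real.sqrt (T - t)) (Real.sqrt (T - t) / 2) σ := by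
    have := ((hasDerivAt_id σ).div_const 2).mul_const (Real.sqrt (T - t))
    simpa using this.congr_deriv (by ring)
  have := h2.sub h3
  unfold bsD2
  convert this using 1
  case e'_4 => rfl
  case e'_5 => rfl
  case e'_8 => rfl
  field_simp
  ring

lemma bs_identity (t T x k σ : ℝ) (ht : t < T) (hσ : 0 < σ) :
    Real.exp x * normPdf (bsD1 t T x k σ) = Real.exp k * normPdf (bsD2 t T x k σ) := by
  have hs : (0:ℝ) < Real.sqrt (T - t) := Real.sqrt_pos.2 (by linarith)
  have hsq : bsD1 t T x k σ ^ 2 - bsD2 t T x k σ ^ 2 = 2 * (x - k) := by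
    unfold bsD1 bsD2
    field_simp
    ring
  have key : Real.exp x * Real.exp (-bsD1 t T x k σ ^ 2 / 2)
      = Real.exp k * Real.exp (-bsD2 t T x k σ ^ 2 / 2) := by
    rw [← Real.exp_add, ← Real.exp_add]; congr 1; linarith
  unfold normPdf
  rw [← mul_div_assoc, ← mul_div_assoc, key]

lemma hasDerivAt_bsPrice (t T x k σ : ℝ) (ht : t < T) (hσ : 0 < σ) :
    HasDerivAt (fun σ => bsPrice t T x k σ)
      (Real.exp x * normPdf (bsD1 t T x k σ) * Real.sqrt (T - t)) σ := by
  have hd1 := hasDerivAt_bsD1 t T x k σ ht hσ.ne'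
  have hd2 := hasDerivAt_bsD2 t T x k σ ht hσ.ne'
  have hN1 := (hasDerivAt_normCdf (bsD1 t T x k σ)).comp σ hd1
  have hN2 := (hasDerivAt_normCdf (bsD2 t T x k σ)).comp σ hd2
  have h := (hN1.const_mul (Real.exp x)).sub (hN2.const_mul (Real.exp k))
  have hb : (fun σ => bsPrice t T x k σ)
      = fun σ => Real.exp x * normCdf (bsD1 t T x k σ) - Real.exp k * normCdf (bsD2 t T x k σ) := by
    funext σ; rfl
  rw [hb]
  convert h using 1
  case e'_4 => rfl
  case e'_5 => rfl
  case e'_8 => rfl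
  have hid := bs_identity t T x k σ ht hσ
  simp only [Function.comp_def] at *
  linear_combination ((x - k) / (σ ^ 2 * Real.sqrt (T - t)) + Real.sqrt (T - t) / 2) * hid

/-- Second derivative of the inverse Black-Scholes function. -/
theorem bs_inv_second_deriv (t T x k : ℝ) (ht : t < T) (inv : ℝ → ℝ)
    (hleft : ∀ σ > (0:ℝ), inv (bsPrice t T x k σ) = σ)
    (hright : ∀ u ∈ interior ((fun σ => bsPrice t T x k σ) '' Set.Ioi 0),
      bsPrice t T x k (inv u) = u) :
    ∀ u ∈ interior ((fun σ => bsPrice t T x k σ) '' Set.Ioi 0),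
      iteratedDeriv 2 inv u
        = ((inv u) ^ 4 * (T - t) ^ 2 - 4 * (x - k) ^ 2) /
            (4 * (Real.exp x * normPdf (bsD1 t T x k (inv u)) * (T - t)) ^ 2 * (inv u) ^ 3) := by
  intro u hu
  have hτ : 0 < T - t := by linarith
  have hsp : 0 < Real.sqrt (T - t) := Real.sqrt_pos.2 hτ
  set U := interior ((fun σ => bsPrice t T x k σ) '' Set.Ioi 0) with hUdef
  have hUopen : IsOpen U := isOpen_interior
  have hinvpos : ∀ u' ∈ U, 0 < inv u' := by
    intro u' hu'
    obtain ⟨σ, hσ, hfσ⟩ := interior_subset hu'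
    rw [← hfσ, hleft σ hσ]; exact hσ
  set vega : ℝ → ℝ := fun σ => Real.exp x * normPdf (bsD1 t T x k σ) * Real.sqrt (T - t)
    with hvega
  have hvegapos : ∀ σ : ℝ, 0 < vega σ :=
    fun σ => mul_pos (mul_pos (Real.exp_pos x) (normPdf_pos _)) hsp
  have hstrict : ∀ σ : ℝ, 0 < σ →
      HasStrictDerivAt (fun σ => bsPrice t T x k σ) (vega σ) σ := by
    intro σ hσ
    apply hasStrictDerivAt_of_hasDerivAt_of_continuousAt
    · filter_upwards [eventually_gt_nhds hσ] with y hy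
      exact hasDerivAt_bsPrice t T x k y ht hy
    · exact ((continuous_normPdf.continuousAt.comp
        (hasDerivAt_bsD1 t T x k σ ht hσ.ne').continuousAt).const_mul
        (Real.exp x)).mul continuousAt_const
  have hinvderiv : ∀ u' ∈ U, HasDerivAt inv (vega (inv u'))⁻¹ u' := by
    intro u' hu'
    have hσ := hinvpos u' hu'
    have hg : ∀ᶠ σ in 𝓝 (inv u'), inv (bsPrice t T x k σ) = σ := by
      filter_upwards [eventually_gt_nhds hσ] with σ h0
      exact hleft σ h0
    have := (hstrict (inv u') hσ).to_local_left_inverse (hvegapos (inv u')).ne' hg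
    rw [hright u' hu'] at this
    exact this.hasDerivAt
  have hderiv_eq : deriv inv =ᶠ[𝓝 u] fun u' => (vega (inv u'))⁻¹ := by
    filter_upwards [hUopen.mem_nhds hu] with u' hu'
    exact (hinvderiv u' hu').deriv
  have h2 : iteratedDeriv 2 inv = deriv (deriv inv) := by
    rw [iteratedDeriv_succ, iteratedDeriv_one]
  rw [h2, hderiv_eq.deriv_eq]
  set σ₀ := inv u with hσ₀def
  have hσ0 : 0 < σ₀ := hinvpos u hu
  have hd1 := hasDerivAt_bsD1 t T x k σ₀ ht hσ0.ne'
  have hNp := (hasDerivAt_normPdf (bsD1 t T x k σ₀)).comp σ₀ hd1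
  have hvega' := ((hNp.const_mul (Real.exp x)).mul_const (Real.sqrt (T - t)))
  have hcomp := hvega'.comp u (hinvderiv u hu)
  have hne : vega (inv u) ≠ 0 := (hvegapos _).ne'
  have hfinal : HasDerivAt (fun u' => (vega (inv u'))⁻¹)
      (-(Real.exp x * (-bsD1 t T x k σ₀ * normPdf (bsD1 t T x k σ₀) *
          (-((x - k) / (σ₀ ^ 2 * Real.sqrt (T - t))) + Real.sqrt (T - t) / 2)) * Real.sqrt (T - t) *
        (vega (inv u))⁻¹) / vega (inv u) ^ 2) u := hcomp.inv hne
  rw [hfinal.deriv]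
  simp only [hvega]
  rw [← hσ₀def]
  set P := normPdf (bsD1 t T x k σ₀) with hP
  have hPpos : 0 < P := hP ▸ normPdf_pos _
  unfold bsD1
  obtain ⟨s, hs_def⟩ : ∃ s, Real.sqrt (T - t) = s := ⟨_, rfl⟩
  have hssq : s ^ 2 = T - t := by rw [← hs_def]; exact Real.sq_sqrt hτ.le
  have hs0 : 0 < s := hs_def ▸ hsp
  rw [hs_def, ← hssq]
  field_simp
  ring
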